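/- arXiv:2308.12204 — 2 statements merged into one kernel-verified Lean document; each statement's English description precedes it below -/
import Mathlib

section
/- Let R be a commutative ring, d_1 ≥ … ≥ d_n integers, D = diag(t^{d_1}, …, t^{d_n}) ∈ GL_n(R((t))), and let K₁ = {k ∈ GL_n(R[[t]]) : k ≡ I mod t}. Suppose g_1, g_2, h_1, h_2 ∈ GL_n(R) and k_1, k_2 ∈ K₁ satisfy g_1⁻¹ D h_1 = k_1⁻¹ g_2⁻¹ D h_2 k_2 in GL_n(R((t))). Then there exist p_−, p_+ ∈ GL_n(R) with: p_− lies in P_− (entries vanish when d_i > d_j), p_+ lies in P_+ (entries vanish when d_i < d_j), p_− and p_+ have the same Levi component (equal (i,j) entries whenever d_i = d_j), and g_1 = p_−⁻¹ g_2, h_1 = p_+⁻¹ h_2. -/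
/-!
Put `A = g₂ k₁ g₁⁻¹` and `B = h₂ k₂ h₁⁻¹` in `GL_n(R[[t]])`. The hypothesis says `A D = D B`,
i.e. `A i j * t^(d j) = t^(d i) * B i j` for all `i, j`. Comparing coefficients of `t^(d j)` and
`t^(d i)` shows that the constant terms satisfy `A(0) i j = 0` if `d i > d j`, `B(0) i j = 0` if
`d i < d j`, and `A(0) i j = B(0) i j` if `d i = d j`. As `k₁ ≡ k₂ ≡ 1 mod t`, these constant terms
are `p₋ = g₂ g₁⁻¹` and `p₊ = h₂ h₁⁻¹`.
-/

open Matrix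

noncomputable section

/-- The inclusion `GL_n(R[[t]]) → GL_n(R((t)))`. -/
def psUnits (R : Type*) [CommRing R] (n : ℕ) :
    GL (Fin n) (PowerSeries R) →* GL (Fin n) (LaurentSeries R) :=
  Units.map ((HahnSeries.ofPowerSeries ℤ R).mapMatrix).toMonoidHom

/-- The inclusion `GL_n(R) → GL_n(R((t)))` as constant matrices. -/
def cUnits (R : Type*) [CommRing R] (n : ℕ) :
    GL (Fin n) R →* GL (Fin n) (LaurentSeries R) :=
  Units.map (((HahnSeries.ofPowerSeries ℤ R).comp (PowerSeries.C : R →+* PowerSeries R)).mapMatrix).toMonoidHom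

/-- Reduction modulo `t` of a matrix over `R[[t]]`. -/
def redMat (R : Type*) [CommRing R] (n : ℕ) :
    Matrix (Fin n) (Fin n) (PowerSeries R) →+* Matrix (Fin n) (Fin n) R :=
  (PowerSeries.constantCoeff : PowerSeries R →+* R).mapMatrix

open HahnSeries
open scoped PowerSeries LaurentSeries

section Scalar

variable {R : Type*} [Semiring R]

theorem coeff_ofPowerSeries_zero (f : R⟦X⟧) :
    (ofPowerSeries ℤ R f).coeff 0 = PowerSeries.constantCoeff f := by
  rw [← PowerSeries.coeff_zero_eq_constantCoeff_apply, ← LaurentSeries.coeff_coe_powerSeries,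
    Nat.cast_zero]

theorem constantCoeff_eq_coeff_of_mul_single_eq {f g : R⟦X⟧} {a b : ℤ}
    (h : ofPowerSeries ℤ R f * single b 1 = single a 1 * ofPowerSeries ℤ R g) :
    PowerSeries.constantCoeff f = (ofPowerSeries ℤ R g).coeff (b - a) := by
  have := congrArg (coeff · (0 + b)) h
  rw [coeff_mul_single_add, mul_one, show (0 : ℤ) + b = b - a + a by ring,
    coeff_single_mul_add, one_mul] at this
  rw [← this, coeff_ofPowerSeries_zero]

theorem coeff_ofPowerSeries_of_neg (f : R⟦X⟧) {m : ℤ} (hm : m < 0) :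
    (ofPowerSeries ℤ R f).coeff m = 0 := by
  rw [PowerSeries.coeff_coe, if_pos hm]

end Scalar

/-- `(P, Q)` lies in the zip group `E_μ` of the cocharacter `t ↦ diag(t^{d i})`:
`P ∈ P₋`, `Q ∈ P₊`, with equal Levi components. -/
def MemZipGroup {R ι : Type*} [Zero R] (d : ι → ℤ) (P Q : Matrix ι ι R) : Prop :=
  (∀ i j, d i > d j → P i j = 0) ∧ (∀ i j, d i < d j → Q i j = 0) ∧
    (∀ i j, d i = d j → P i j = Q i j)

section MatrixLemmas

variable {R ι : Type*} [CommRing R] [Fintype ι] [DecidableEq ι]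

theorem memZipGroup_map_constantCoeff {A B : Matrix ι ι R⟦X⟧} {d : ι → ℤ}
    (h : A.map (ofPowerSeries ℤ R) * diagonal (fun i => single (d i) 1) =
      diagonal (fun i => single (d i) 1) * B.map (ofPowerSeries ℤ R)) :
    MemZipGroup d (A.map PowerSeries.constantCoeff) (B.map PowerSeries.constantCoeff) := by
  have hij : ∀ i j, ofPowerSeries ℤ R (A i j) * single (d j) 1 =
      single (d i) 1 * ofPowerSeries ℤ R (B i j) := fun i j => by
    simpa [mul_diagonal, diagonal_mul] using congrFun₂ h i j
  have hA i j := constantCoeff_eq_coeff_of_mul_single_eq (hij i j)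
  have hB i j := constantCoeff_eq_coeff_of_mul_single_eq ((mul_comm _ _).trans <|
    (hij i j).symm.trans (mul_comm _ _))
  refine ⟨fun i j hd => ?_, fun i j hd => ?_, fun i j hd => ?_⟩
  · simp only [map_apply, hA, coeff_ofPowerSeries_of_neg _ (sub_neg.2 hd)]
  · simp only [map_apply, hB, coeff_ofPowerSeries_of_neg _ (sub_neg.2 hd)]
  · simp only [map_apply, hA, hd, sub_self, coeff_ofPowerSeries_zero]

end MatrixLemmas

theorem mul_mul_inv_mul_eq_mul_of_inv_mul_mul_eq {G : Type*} [Group G]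
    {g₁ g₂ h₁ h₂ k₁ k₂ D : G}
    (h : g₁⁻¹ * D * h₁ = k₁⁻¹ * g₂⁻¹ * D * h₂ * k₂) :
    g₂ * k₁ * g₁⁻¹ * D = D * (h₂ * k₂ * h₁⁻¹) :=
  calc g₂ * k₁ * g₁⁻¹ * D = g₂ * k₁ * (g₁⁻¹ * D * h₁) * h₁⁻¹ := by group
    _ = g₂ * k₁ * (k₁⁻¹ * g₂⁻¹ * D * h₂ * k₂) * h₁⁻¹ := by rw [h]
    _ = D * (h₂ * k₂ * h₁⁻¹) := by group

def cPSUnits (R : Type*) [CommRing R] (n : ℕ) : GL (Fin n) R →* GL (Fin n) R⟦X⟧ :=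
  Units.map (PowerSeries.C : R →+* R⟦X⟧).mapMatrix.toMonoidHom

section Units

variable {R : Type*} [CommRing R] {n : ℕ}

theorem coe_psUnits (k : GL (Fin n) R⟦X⟧) :
    (psUnits R n k : Matrix (Fin n) (Fin n) R⸨X⸩) = (k : Matrix (Fin n) (Fin n) R⟦X⟧).map
      (ofPowerSeries ℤ R) :=
  rfl

theorem redMat_eq_map (M : Matrix (Fin n) (Fin n) R⟦X⟧) :
    redMat R n M = M.map PowerSeries.constantCoeff :=
  rfl

theorem psUnits_comp_cPSUnits : (psUnits R n).comp (cPSUnits R n) = cUnits R n := by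
  ext g i j
  simp [cUnits, psUnits, cPSUnits, RingHom.mapMatrix_apply]

theorem redMat_cPSUnits (g : GL (Fin n) R) : redMat R n (cPSUnits R n g) = g := by
  ext i j
  simp [redMat, cPSUnits, RingHom.mapMatrix_apply]

theorem redMat_cPSUnits_mul_mul_inv {k : GL (Fin n) R⟦X⟧} (hk : redMat R n k = 1)
    (g g' : GL (Fin n) R) :
    redMat R n ↑(cPSUnits R n g * k * (cPSUnits R n g')⁻¹) = ↑(g * g'⁻¹) := by
  rw [← map_inv]
  simp only [Units.val_mul, map_mul, redMat_cPSUnits, hk, mul_one]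

theorem psUnits_mul_eq_mul_psUnits_of_eq {D : GL (Fin n) R⸨X⸩} {g₁ g₂ h₁ h₂ : GL (Fin n) R}
    {k₁ k₂ : GL (Fin n) R⟦X⟧}
    (heq : cUnits R n g₁⁻¹ * D * cUnits R n h₁ =
      (psUnits R n k₁)⁻¹ * cUnits R n g₂⁻¹ * D * cUnits R n h₂ * psUnits R n k₂) :
    psUnits R n (cPSUnits R n g₂ * k₁ * (cPSUnits R n g₁)⁻¹) * D =
      D * psUnits R n (cPSUnits R n h₂ * k₂ * (cPSUnits R n h₁)⁻¹) := by
  simp only [← psUnits_comp_cPSUnits, MonoidHom.comp_apply, map_inv] at heq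
  simpa only [map_mul, map_inv] using mul_mul_inv_mul_eq_mul_of_inv_mul_mul_eq heq

end Units

theorem viehmann_stmt5_general (R : Type*) [CommRing R] (n : ℕ)
    (d : Fin n → ℤ)
    (D : GL (Fin n) (LaurentSeries R))
    (hD : (D : Matrix (Fin n) (Fin n) (LaurentSeries R)) =
      Matrix.diagonal fun i => HahnSeries.single (d i) (1 : R))
    (g₁ g₂ h₁ h₂ : GL (Fin n) R) (k₁ k₂ : GL (Fin n) (PowerSeries R))
    (hk₁ : redMat R n (k₁ : Matrix (Fin n) (Fin n) (PowerSeries R)) = 1)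
    (hk₂ : redMat R n (k₂ : Matrix (Fin n) (Fin n) (PowerSeries R)) = 1)
    (heq : cUnits R n g₁⁻¹ * D * cUnits R n h₁ =
      (psUnits R n k₁)⁻¹ * cUnits R n g₂⁻¹ * D * cUnits R n h₂ * psUnits R n k₂) :
    ∃ pm pp : GL (Fin n) R,
      (∀ i j : Fin n, d i > d j → (pm : Matrix (Fin n) (Fin n) R) i j = 0) ∧
      (∀ i j : Fin n, d i < d j → (pp : Matrix (Fin n) (Fin n) R) i j = 0) ∧
      (∀ i j : Fin n, d i = d j →
        (pm : Matrix (Fin n) (Fin n) R) i j = (pp : Matrix (Fin n) (Fin n) R) i j) ∧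
      g₁ = pm⁻¹ * g₂ ∧ h₁ = pp⁻¹ * h₂ := by
  have hAB := congrArg Units.val (psUnits_mul_eq_mul_psUnits_of_eq heq)
  rw [Units.val_mul, Units.val_mul, hD, coe_psUnits, coe_psUnits] at hAB
  have hzip := memZipGroup_map_constantCoeff hAB
  rw [← redMat_eq_map, ← redMat_eq_map, redMat_cPSUnits_mul_mul_inv hk₁,
    redMat_cPSUnits_mul_mul_inv hk₂] at hzip
  exact ⟨g₂ * g₁⁻¹, h₂ * h₁⁻¹, hzip.1, hzip.2.1, hzip.2.2, by group, by group⟩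

/-- if `g₁⁻¹ D h₁ = k₁⁻¹ g₂⁻¹ D h₂ k₂` with `k₁, k₂ ∈ K₁` and
`g₁, g₂, h₁, h₂ ∈ GL_n(R)` (constants), then there is a zip-group element `(p₋, p₊)` with
`g₁ = p₋⁻¹ g₂` and `h₁ = p₊⁻¹ h₂`. -/
theorem viehmann_stmt5 (R : Type*) [CommRing R] (n : ℕ) (hn : 1 ≤ n)
    (d : Fin n → ℤ) (hd : Antitone d)
    (D : GL (Fin n) (LaurentSeries R))
    (hD : (D : Matrix (Fin n) (Fin n) (LaurentSeries R)) =
      Matrix.diagonal fun i => HahnSeries.single (d i) (1 : R))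
    (g₁ g₂ h₁ h₂ : GL (Fin n) R) (k₁ k₂ : GL (Fin n) (PowerSeries R))
    (hk₁ : redMat R n (k₁ : Matrix (Fin n) (Fin n) (PowerSeries R)) = 1)
    (hk₂ : redMat R n (k₂ : Matrix (Fin n) (Fin n) (PowerSeries R)) = 1)
    (heq : cUnits R n g₁⁻¹ * D * cUnits R n h₁ =
      (psUnits R n k₁)⁻¹ * cUnits R n g₂⁻¹ * D * cUnits R n h₂ * psUnits R n k₂) :
    ∃ pm pp : GL (Fin n) R,
      (∀ i j : Fin n, d i > d j → (pm : Matrix (Fin n) (Fin n) R) i j = 0) ∧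
      (∀ i j : Fin n, d i < d j → (pp : Matrix (Fin n) (Fin n) R) i j = 0) ∧
      (∀ i j : Fin n, d i = d j →
        (pm : Matrix (Fin n) (Fin n) R) i j = (pp : Matrix (Fin n) (Fin n) R) i j) ∧
      g₁ = pm⁻¹ * g₂ ∧ h₁ = pp⁻¹ * h₂ :=
  viehmann_stmt5_general R n d D hD g₁ g₂ h₁ h₂ k₁ k₂ hk₁ hk₂ heq

end
end

section
/- Let R be a commutative ring, d_1 ≥ … ≥ d_n integers, D = diag(t^{d_1}, …, t^{d_n}), and K₁ = ker(GL_n(R[[t]]) → GL_n(R)). Let g ∈ GL_n(R) and let p_+ ∈ GL_n(R) lie in P_+ (entries vanish when d_i < d_j), with Levi component m (the matrix keeping only entries of p_+ with d_i = d_j, which lies in GL_n(R)). Then the elements p_+⁻¹ g D m and p_+⁻¹ g D p_+ of GL_n(R((t))) lie in the same left K₁-coset; equivalently, (p_+⁻¹ g D m)(p_+⁻¹ g D p_+)⁻¹ ∈ K₁. -/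
open Matrix

noncomputable section

/-- Reduction modulo `t` as a group homomorphism `GL_n(R[[t]]) → GL_n(R)`. -/
def redHom (R : Type*) [CommRing R] (n : ℕ) :
    GL (Fin n) (PowerSeries R) →* GL (Fin n) R :=
  Units.map ((PowerSeries.constantCoeff : PowerSeries R →+* R).mapMatrix).toMonoidHom

/-- The congruence subgroup `K₁ = ker(GL_n(R[[t]]) → GL_n(R))`, viewed as a subgroup of
`GL_n(R((t)))`. -/
def K₁ (R : Type*) [CommRing R] (n : ℕ) : Subgroup (GL (Fin n) (LaurentSeries R)) :=
  Subgroup.map (psUnits R n) (redHom R n).ker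

/-! Write `a = m p₊⁻¹`. Conjugating the whole expression by the constant matrix `p₊⁻¹ g`,
which normalises `K₁`, reduces the claim to `D a D⁻¹ ∈ K₁`. The matrix
`a - 1 = (m - p₊) p₊⁻¹` is strictly block lower triangular with respect to `d`, so the
`(i, j)` entry of `D a D⁻¹`, namely `t^(d i - d j) a i j`, is a power series, and it is
`≡ δ i j` modulo `t`. -/

open OrderDual in
theorem levi_mul_inv_apply_eq_one_apply {R ι α : Type*} [CommRing R] [Fintype ι]
    [DecidableEq ι] [LinearOrder α] (d : ι → α) (P M : GL ι R)
    (hP : BlockTriangular (P : Matrix ι ι R) (toDual ∘ d))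
    (hM₁ : ∀ i j, d i = d j → (M : Matrix ι ι R) i j = (P : Matrix ι ι R) i j)
    (hM₂ : ∀ i j, d i ≠ d j → (M : Matrix ι ι R) i j = 0) (i j : ι)
    (hij : ¬ d j < d i) :
    ((M * P⁻¹ : GL ι R) : Matrix ι ι R) i j = (1 : Matrix ι ι R) i j := by
  have : Invertible (P : Matrix ι ι R) := P.invertible
  have hPinv : BlockTriangular (P : Matrix ι ι R)⁻¹ (toDual ∘ d) :=
    blockTriangular_inv_of_blockTriangular hP
  have hsplit : ((M * P⁻¹ : GL ι R) : Matrix ι ι R)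
      = 1 + ((M : Matrix ι ι R) - P) * (P : Matrix ι ι R)⁻¹ := by
    rw [Units.val_mul, coe_units_inv, sub_mul, mul_inv_of_invertible, add_sub_cancel]
  rw [hsplit, Matrix.add_apply, mul_apply, add_eq_left]
  refine Finset.sum_eq_zero fun k _ => ?_
  rcases lt_trichotomy (d i) (d k) with hik | hik | hik
  · rw [Matrix.sub_apply, hM₂ i k hik.ne, hP (show toDual (d k) < toDual (d i) from hik),
      sub_zero, zero_mul]
  · rw [Matrix.sub_apply, hM₁ i k hik, sub_self, zero_mul]
  · rw [hPinv (show toDual (d j) < toDual (d k) from hik.trans_le (not_lt.mp hij)), mul_zero]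

section

variable {R : Type*} [CommRing R] {n : ℕ}

theorem psUnits_conj_mem_K₁ (v : GL (Fin n) (PowerSeries R)) {k : GL (Fin n) (LaurentSeries R)}
    (hk : k ∈ K₁ R n) : psUnits R n v * k * (psUnits R n v)⁻¹ ∈ K₁ R n := by
  obtain ⟨k', hk', rfl⟩ := hk
  refine ⟨v * k' * v⁻¹, (redHom R n).normal_ker.conj_mem k' hk' v, ?_⟩
  simp only [map_mul, map_inv]

theorem cUnits_conj_mem_K₁ (u : GL (Fin n) R) {k : GL (Fin n) (LaurentSeries R)}
    (hk : k ∈ K₁ R n) : cUnits R n u * k * (cUnits R n u)⁻¹ ∈ K₁ R n := by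
  have hc : cUnits R n u =
      psUnits R n (Units.map (PowerSeries.C (R := R)).mapMatrix.toMonoidHom u) := by
    ext i j
    simp [cUnits, psUnits]
  rw [hc]
  exact psUnits_conj_mem_K₁ _ hk

theorem val_cUnits_apply (u : GL (Fin n) R) (i j : Fin n) :
    (cUnits R n u : Matrix (Fin n) (Fin n) (LaurentSeries R)) i j =
      HahnSeries.single 0 ((u : Matrix (Fin n) (Fin n) R) i j) := by
  simp [cUnits]

theorem mem_K₁_of_val_eq_map (U : GL (Fin n) (LaurentSeries R))
    (N : Matrix (Fin n) (Fin n) (PowerSeries R))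
    (hU : (U : Matrix (Fin n) (Fin n) (LaurentSeries R)) =
      (HahnSeries.ofPowerSeries ℤ R).mapMatrix N)
    (hN : (PowerSeries.constantCoeff (R := R)).mapMatrix N = 1) : U ∈ K₁ R n := by
  have hdet : IsUnit N.det := by
    rw [PowerSeries.isUnit_iff_constantCoeff, RingHom.map_det, hN, det_one]
    exact isUnit_one
  obtain ⟨V, hV⟩ := (isUnit_iff_isUnit_det N).mpr hdet
  refine ⟨V, Units.ext ?_, Units.ext ?_⟩
  · simp [redHom, hV, hN]
  · simp [psUnits, hV, hU]

theorem diagonal_conj_mem_K₁ (d : Fin n → ℤ) (D : GL (Fin n) (LaurentSeries R))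
    (hD : (D : Matrix (Fin n) (Fin n) (LaurentSeries R)) =
      Matrix.diagonal fun i => HahnSeries.single (d i) (1 : R))
    (a : GL (Fin n) R)
    (ha : ∀ i j, ¬ d j < d i → (a : Matrix (Fin n) (Fin n) R) i j = (1 : Matrix _ _ R) i j) :
    D * cUnits R n a * D⁻¹ ∈ K₁ R n := by
  have ha_lt : ∀ i j, d i < d j → (a : Matrix (Fin n) (Fin n) R) i j = 0 := fun i j h => by
    rw [ha i j h.not_gt, one_apply_ne fun hij => h.ne (congrArg d hij)]
  set N : Matrix (Fin n) (Fin n) (PowerSeries R) :=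
    Matrix.of fun i j => PowerSeries.X ^ (d i - d j).toNat * PowerSeries.C (a i j)
  have hND : (HahnSeries.ofPowerSeries ℤ R).mapMatrix N * D = D * cUnits R n a := by
    refine Matrix.ext fun i j => ?_
    simp only [hD, mul_diagonal, diagonal_mul, N, RingHom.mapMatrix_apply, map_apply, of_apply,
      map_mul, HahnSeries.ofPowerSeries_X_pow, HahnSeries.ofPowerSeries_C, HahnSeries.C_apply,
      HahnSeries.single_mul_single, val_cUnits_apply, one_mul, mul_one, add_zero]
    rcases lt_or_ge (d i) (d j) with hij | hij
    · rw [ha_lt i j hij, HahnSeries.single_eq_zero, HahnSeries.single_eq_zero]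
    · rw [show ((d i - d j).toNat : ℤ) + d j = d i by omega]
  refine mem_K₁_of_val_eq_map _ N ?_ ?_
  · rw [Units.val_mul, Units.val_mul, ← hND, mul_assoc, ← Units.val_mul, mul_inv_cancel,
      Units.val_one, mul_one]
  · ext i j
    simp only [N, RingHom.mapMatrix_apply, map_apply, of_apply, map_mul, map_pow,
      PowerSeries.constantCoeff_X, PowerSeries.constantCoeff_C]
    by_cases hji : d j < d i
    · rw [zero_pow (by omega), zero_mul, one_apply_ne fun h => hji.ne (congrArg d h.symm)]
    · rw [ha i j hji]
      rcases eq_or_ne i j with rfl | hne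
      · simp
      · rw [one_apply_ne hne, mul_zero]

end

theorem viehmann_stmt16_general (R : Type*) [CommRing R] (n : ℕ)
    (d : Fin n → ℤ)
    (D : GL (Fin n) (LaurentSeries R))
    (hD : (D : Matrix (Fin n) (Fin n) (LaurentSeries R)) =
      Matrix.diagonal fun i => HahnSeries.single (d i) (1 : R))
    (g pp m : GL (Fin n) R)
    (hpp : ∀ i j : Fin n, d i < d j → (pp : Matrix (Fin n) (Fin n) R) i j = 0)
    (hm₁ : ∀ i j : Fin n, d i = d j →
      (m : Matrix (Fin n) (Fin n) R) i j = (pp : Matrix (Fin n) (Fin n) R) i j)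
    (hm₂ : ∀ i j : Fin n, d i ≠ d j → (m : Matrix (Fin n) (Fin n) R) i j = 0) :
    (cUnits R n pp⁻¹ * cUnits R n g * D * cUnits R n m) *
      (cUnits R n pp⁻¹ * cUnits R n g * D * cUnits R n pp)⁻¹ ∈ K₁ R n := by
  have hDa : D * cUnits R n (m * pp⁻¹) * D⁻¹ ∈ K₁ R n :=
    diagonal_conj_mem_K₁ d D hD _
      (levi_mul_inv_apply_eq_one_apply d pp m (fun i j h => hpp i j h) hm₁ hm₂)
  convert cUnits_conj_mem_K₁ (pp⁻¹ * g) hDa using 1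
  simp only [map_mul, map_inv]
  group

/-- for `g ∈ GL_n(R)`, `p₊ ∈ P₊ ⊆ GL_n(R)` with Levi component
`m ∈ GL_n(R)`, the elements `p₊⁻¹ g D m` and `p₊⁻¹ g D p₊` of `GL_n(R((t)))` lie in the
same left `K₁`-coset, i.e. `(p₊⁻¹ g D m)(p₊⁻¹ g D p₊)⁻¹ ∈ K₁`. -/
theorem viehmann_stmt16 (R : Type*) [CommRing R] (n : ℕ) (hn : 1 ≤ n)
    (d : Fin n → ℤ) (hd : Antitone d)
    (D : GL (Fin n) (LaurentSeries R))
    (hD : (D : Matrix (Fin n) (Fin n) (LaurentSeries R)) =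
      Matrix.diagonal fun i => HahnSeries.single (d i) (1 : R))
    (g pp m : GL (Fin n) R)
    (hpp : ∀ i j : Fin n, d i < d j → (pp : Matrix (Fin n) (Fin n) R) i j = 0)
    (hm₁ : ∀ i j : Fin n, d i = d j →
      (m : Matrix (Fin n) (Fin n) R) i j = (pp : Matrix (Fin n) (Fin n) R) i j)
    (hm₂ : ∀ i j : Fin n, d i ≠ d j → (m : Matrix (Fin n) (Fin n) R) i j = 0) :
    (cUnits R n pp⁻¹ * cUnits R n g * D * cUnits R n m) *
      (cUnits R n pp⁻¹ * cUnits R n g * D * cUnits R n pp)⁻¹ ∈ K₁ R n :=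
  viehmann_stmt16_general R n d D hD g pp m hpp hm₁ hm₂

end
end
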